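/- arXiv:1909.06201 — 9 statements merged into one kernel-verified Lean document; each statement's English description precedes it below -/
import Mathlib

section
/- Let g_n : ℕ × ℕ → ℕ be defined by g_n(x,y) = n if x < n and g_n(x,y) = x otherwise. Then every function f : ℕ^m → ℕ that is a term function over the set {g_n : n ≥ 1} (i.e., built from the g_n's and projections by composition) admits a threshold k ≥ 0 such that f(x_1,…,x_m) ≥ k whenever all x_i < k, and f restricted to [k,∞)^m equals a projection. -/
/-- `gfun n x y = n` if `x < n`, else `x`. -/
def gfun (n x y : ℕ) : ℕ := if x < n then n else x

/-- Term functions over `{g_n : n ≥ 1}`: built from projections and the `g_n`'s by composition. -/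
inductive IsTermFun : ∀ {m : ℕ}, ((Fin m → ℕ) → ℕ) → Prop
  | proj {m : ℕ} (i : Fin m) : IsTermFun (fun x => x i)
  | comp {m : ℕ} (n : ℕ) (hn : 1 ≤ n) {s t : (Fin m → ℕ) → ℕ} :
      IsTermFun s → IsTermFun t → IsTermFun (fun x => gfun n (s x) (t x))

lemma termFun_form {m : ℕ} (f : (Fin m → ℕ) → ℕ) (hf : IsTermFun f) :
    ∃ k : ℕ, ∃ j : Fin m, ∀ x, f x = if x j < k then k else x j := by
  induction hf with
  | proj i => exact ⟨0, i, fun x => by simp⟩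
  | comp n hn hs ht ihs iht =>
    obtain ⟨k, j, hk⟩ := ihs
    refine ⟨max n k, j, fun x => ?_⟩
    simp only [gfun, hk]
    split_ifs <;> omega

theorem stmt_0 {m : ℕ} (f : (Fin m → ℕ) → ℕ) (hf : IsTermFun f) :
    ∃ k : ℕ, (∀ x : Fin m → ℕ, (∀ i, x i < k) → k ≤ f x) ∧
      ∃ j : Fin m, ∀ x : Fin m → ℕ, (∀ i, k ≤ x i) → f x = x j := by
  obtain ⟨k, j, hk⟩ := termFun_form f hf
  refine ⟨k, fun x hx => ?_, j, fun x hx => ?_⟩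
  · rw [hk]; have := hx j; split_ifs <;> omega
  · rw [hk]; have := hx j; split_ifs <;> omega
end

section
/- For every n ≥ 1, the function g_n(x,y) on ℕ defined by g_n(x,y) = n if x < n and g_n(x,y) = x otherwise is not symmetric: there exist x, y with g_n(x,y) ≠ g_n(y,x). Consequently, any map ξ from the clone generated by {g_n : n ≥ 1} to the projection clone on a two-element set that preserves permutation of variables and whose value on each function depends only on the restriction of that function to a fixed finite subset F ⊆ ℕ leads to a contradiction: for n with F ⊆ [0,n), ξ(g_n(x,y)) would have to equal both projections. -/
/-- Binary members of the clone generated by `{g_n : n ≥ 1}`. -/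
inductive InClone2 : (ℕ → ℕ → ℕ) → Prop
  | proj1 : InClone2 (fun x _ => x)
  | proj2 : InClone2 (fun _ y => y)
  | comp (n : ℕ) (hn : 1 ≤ n) {a b : ℕ → ℕ → ℕ} :
      InClone2 a → InClone2 b → InClone2 (fun x y => gfun n (a x y) (b x y))

theorem stmt_1 :
    (∀ n : ℕ, 1 ≤ n → ∃ x y : ℕ, gfun n x y ≠ gfun n y x) ∧
    (∀ (F : Finset ℕ) (ξ : (ℕ → ℕ → ℕ) → Fin 2),
      -- the value of ξ on clone members depends only on the restriction to F
      (∀ g h : ℕ → ℕ → ℕ, InClone2 g → InClone2 h →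
        (∀ x ∈ F, ∀ y ∈ F, g x y = h x y) → ξ g = ξ h) →
      -- ξ preserves permutation of the two variables
      (∀ g : ℕ → ℕ → ℕ, InClone2 g →
        ξ (fun x y => g y x) = if ξ g = 0 then 1 else 0) →
      False) := by
  constructor
  · intro n hn
    refine ⟨0, n + 1, ?_⟩
    unfold gfun
    rw [if_pos (by omega : 0 < n), if_neg (by omega : ¬ n + 1 < n)]
    omega
  · intro F ξ hres hperm
    set n := (F.sup id) + 1 with hn
    have hn1 : 1 ≤ n := Nat.le_add_left 1 _
    have hF : ∀ x ∈ F, x < n := fun x hx =>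
      Nat.lt_succ_of_le (Finset.le_sup (f := id) hx)
    have hg : InClone2 (fun x y => gfun n x y) :=
      InClone2.comp n hn1 InClone2.proj1 InClone2.proj2
    have hg' : InClone2 (fun x y => gfun n y x) :=
      InClone2.comp n hn1 InClone2.proj2 InClone2.proj1
    have heq : ξ (fun x y => gfun n x y) = ξ (fun x y => gfun n y x) := by
      apply hres _ _ hg hg'
      intro x hx y hy
      simp [gfun, hF x hx, hF y hy]
    have hp := hperm _ hg
    rw [← heq] at hp
    rcases Fin.exists_fin_two.mp ⟨ξ (fun x y => gfun n x y), rfl⟩ with h | h <;>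
      simp [h] at hp
end

section
/- Let C be a function clone on a set C and ξ : C → P a mapping to the clone of projections on {0,1}. If ξ preserves arities, preserves identities of height 1 (i.e., f(variables) ≈ g(variables)), and preserves composition with unary members both from inside and outside, then ξ is a clone homomorphism (i.e., it preserves projections and all compositions). -/
/-- A function clone on `A` (operations of positive arity `n+1`),
containing all projections and closed under composition. -/
structure CloneOn (A : Type*) where
  ops : ∀ n : ℕ, Set ((Fin (n + 1) → A) → A)
  proj_mem : ∀ (n : ℕ) (i : Fin (n + 1)), (fun x => x i) ∈ ops n
  comp_mem : ∀ (n m : ℕ) (f : (Fin (n + 1) → A) → A)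
      (g : Fin (n + 1) → ((Fin (m + 1) → A) → A)),
      f ∈ ops n → (∀ i, g i ∈ ops m) →
      (fun x => f (fun i => g i x)) ∈ ops m

/-- `u : A → A` is a unary member of the clone. -/
def CloneOn.unaryMem {A : Type*} (C : CloneOn A) (u : A → A) : Prop :=
  (fun x : Fin 1 → A => u (x 0)) ∈ C.ops 0

/-!
Let `j = ξ f` and spread the arguments of `f(g₀, …, gₙ)` over disjoint blocks of variables,
`F(x) = f(g₀(x₀,·), …, gₙ(xₙ,·))`. Collapsing every block to a single variable turns `F` into
`f` with the unary members `a ↦ gᵢ(a, …, a)` plugged in, so `ξ F` lies in block `j`.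
Collapsing only the blocks `i ≠ j` shows in the same way that `ξ F` does not change when every
`gᵢ` with `i ≠ j` is replaced by a projection; hence it only depends on `gⱼ`, and we may replace
every `gᵢ` by `gⱼ`. Identifying all blocks, `ξ (f(g₀, …, gₙ)) = ξ (f(gⱼ, …, gⱼ))`, and the latter
is `ξ gⱼ`, since `f(gⱼ, …, gⱼ)` is `gⱼ` followed by the unary member `a ↦ f(a, …, a)`.
-/

namespace CloneOn

variable {A : Type*} (C : CloneOn A)

/-- Almost clone homomorphisms into the projection clone, a projection being encoded by its
index: the identities `α(f(β₁(x_{σ 1}), …)) ≈ γ(g(δ₁(x_{τ 1}), …))` with unary members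
`α, βᵢ, γ, δⱼ` are preserved. -/
def IsAlmostHom (ξ : ∀ n : ℕ, ((Fin (n + 1) → A) → A) → Fin (n + 1)) : Prop :=
  ∀ (n m k : ℕ) (f : (Fin (n + 1) → A) → A) (g : (Fin (m + 1) → A) → A)
    (α γ : A → A) (β : Fin (n + 1) → A → A) (δ : Fin (m + 1) → A → A)
    (σ : Fin (n + 1) → Fin (k + 1)) (τ : Fin (m + 1) → Fin (k + 1)),
    f ∈ C.ops n → g ∈ C.ops m → C.unaryMem α → C.unaryMem γ →
    (∀ i, C.unaryMem (β i)) → (∀ j, C.unaryMem (δ j)) →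
    (∀ x : Fin (k + 1) → A,
      α (f (fun i => β i (x (σ i)))) = γ (g (fun j => δ j (x (τ j))))) →
    σ (ξ n f) = τ (ξ m g)

theorem unaryMem_id : C.unaryMem id :=
  C.proj_mem 0 0

theorem unaryMem_diag {n : ℕ} {f : (Fin (n + 1) → A) → A} (hf : f ∈ C.ops n) :
    C.unaryMem (fun a => f (fun _ => a)) :=
  C.comp_mem n 0 f (fun _ x => x 0) hf fun _ => C.proj_mem 0 0

variable {n m k : ℕ}

def blockComp (e : Fin (n + 1) × Fin (m + 1) ≃ Fin (k + 1)) (f : (Fin (n + 1) → A) → A)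
    (h : Fin (n + 1) → (Fin (m + 1) → A) → A) : (Fin (k + 1) → A) → A :=
  fun x => f fun i => h i fun l => x (e (i, l))

variable {C}

theorem blockComp_mem (e : Fin (n + 1) × Fin (m + 1) ≃ Fin (k + 1))
    {f : (Fin (n + 1) → A) → A} {h : Fin (n + 1) → (Fin (m + 1) → A) → A}
    (hf : f ∈ C.ops n) (hh : ∀ i, h i ∈ C.ops m) : blockComp e f h ∈ C.ops k :=
  C.comp_mem n k f _ hf fun i =>
    C.comp_mem m k (h i) (fun l x => x (e (i, l))) (hh i) fun _ => C.proj_mem k _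

namespace IsAlmostHom

variable {ξ : ∀ n : ℕ, ((Fin (n + 1) → A) → A) → Fin (n + 1)} (hξ : C.IsAlmostHom ξ)
include hξ

theorem map_minor {f : (Fin (n + 1) → A) → A} {g : (Fin (m + 1) → A) → A}
    (hf : f ∈ C.ops n) (hg : g ∈ C.ops m)
    (σ : Fin (n + 1) → Fin (k + 1)) (τ : Fin (m + 1) → Fin (k + 1))
    (hfg : ∀ x : Fin (k + 1) → A, f (x ∘ σ) = g (x ∘ τ)) : σ (ξ n f) = τ (ξ m g) :=
  hξ n m k f g id id (fun _ => id) (fun _ => id) σ τ hf hg C.unaryMem_id C.unaryMem_id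
    (fun _ => C.unaryMem_id) (fun _ => C.unaryMem_id) hfg

theorem map_proj (i : Fin (n + 1)) : ξ n (fun x => x i) = i :=
  hξ.map_minor (k := n) (C.proj_mem n i) (C.proj_mem 0 0) id (fun _ => i) fun _ => rfl

theorem map_unary_comp {g : (Fin (m + 1) → A) → A} (hg : g ∈ C.ops m) {u : A → A}
    (hu : C.unaryMem u) : ξ m (fun x => u (g x)) = ξ m g :=
  hξ m m m _ g id u (fun _ => id) (fun _ => id) id id (C.comp_mem 0 m _ _ hu fun _ => hg) hg
    C.unaryMem_id hu (fun _ => C.unaryMem_id) (fun _ => C.unaryMem_id) fun _ => rfl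

theorem fst_map_blockComp (e : Fin (n + 1) × Fin (m + 1) ≃ Fin (k + 1))
    {f : (Fin (n + 1) → A) → A} {g : Fin (n + 1) → (Fin (m + 1) → A) → A}
    (hf : f ∈ C.ops n) (hg : ∀ i, g i ∈ C.ops m) :
    (e.symm (ξ k (blockComp e f g))).1 = ξ n f := by
  have := hξ k n k (blockComp e f g) f id id (fun _ => id) (fun i a => g i fun _ => a)
    (fun u => e ((e.symm u).1, 0)) (fun i => e (i, 0)) (blockComp_mem e hf hg) hf
    C.unaryMem_id C.unaryMem_id (fun _ => C.unaryMem_id) (fun i => C.unaryMem_diag (hg i))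
    fun x => by simp [blockComp]
  simpa using congrArg (fun u => (e.symm u).1) this

theorem snd_map_blockComp (e : Fin (n + 1) × Fin (m + 1) ≃ Fin (k + 1))
    {f : (Fin (n + 1) → A) → A} {g : Fin (n + 1) → (Fin (m + 1) → A) → A}
    (hf : f ∈ C.ops n) (hg : ∀ i, g i ∈ C.ops m) :
    (e.symm (ξ k (blockComp e f g))).2 = ξ m (fun x => f fun i => g i x) :=
  hξ.map_minor (blockComp_mem e hf hg) (C.comp_mem n m f g hf hg) (fun u => (e.symm u).2) id
    fun x => by simp [blockComp]

theorem map_blockComp_eq_single (e : Fin (n + 1) × Fin (m + 1) ≃ Fin (k + 1))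
    {f : (Fin (n + 1) → A) → A} {g : Fin (n + 1) → (Fin (m + 1) → A) → A}
    (hf : f ∈ C.ops n) (hg : ∀ i, g i ∈ C.ops m) :
    ξ k (blockComp e f g) =
      ξ k (blockComp e f fun i => if i = ξ n f then g (ξ n f) else fun y => y 0) := by
  set j := ξ n f
  set P := blockComp e f fun i => if i = j then g j else fun y => y 0
  have hP : P ∈ C.ops k := blockComp_mem e hf fun i => by
    split_ifs
    exacts [hg j, C.proj_mem m 0]
  set ρ : Fin (k + 1) → Fin (k + 1) := fun u =>
    if (e.symm u).1 = j then u else e ((e.symm u).1, 0)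
  have fst_ρ (u) : (e.symm (ρ u)).1 = (e.symm u).1 := by
    by_cases hu : (e.symm u).1 = j <;> simp [ρ, hu]
  have ρ_of_fst {u} (hu : (e.symm u).1 = j) : ρ u = u := if_pos hu
  have hρ : ρ (ξ k (blockComp e f g)) = ρ (ξ k P) := by
    refine hξ k k k _ P id id (fun _ => id)
      (fun u => if (e.symm u).1 = j then id else fun a => g (e.symm u).1 fun _ => a) ρ ρ
      (blockComp_mem e hf hg) hP C.unaryMem_id C.unaryMem_id (fun _ => C.unaryMem_id)
      (fun u => ?_) fun x => ?_
    · split_ifs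
      exacts [C.unaryMem_id, C.unaryMem_diag (hg _)]
    · simp only [blockComp, P, id]
      congr 1
      funext i
      by_cases hi : i = j <;> simp [ρ, hi]
  have hF := hξ.fst_map_blockComp e hf hg
  have hPfst : (e.symm (ξ k P)).1 = j := by rw [← fst_ρ, ← hρ, fst_ρ, hF]
  rwa [ρ_of_fst hF, ρ_of_fst hPfst] at hρ

theorem map_comp {f : (Fin (n + 1) → A) → A} {g : Fin (n + 1) → (Fin (m + 1) → A) → A}
    (hf : f ∈ C.ops n) (hg : ∀ i, g i ∈ C.ops m) :
    ξ m (fun x => f fun i => g i x) = ξ m (g (ξ n f)) := by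
  set j := ξ n f
  let e : Fin (n + 1) × Fin (m + 1) ≃ Fin (n * m + n + m + 1) :=
    finProdFinEquiv.trans (finCongr (by ring))
  have hgj : ∀ _ : Fin (n + 1), g j ∈ C.ops m := fun _ => hg j
  calc ξ m (fun x => f fun i => g i x)
      = (e.symm (ξ _ (blockComp e f g))).2 := (hξ.snd_map_blockComp e hf hg).symm
    _ = (e.symm (ξ _ (blockComp e f fun _ => g j))).2 := by
      rw [hξ.map_blockComp_eq_single e hf hg, hξ.map_blockComp_eq_single e hf hgj]
    _ = ξ m (fun x => (fun a => f fun _ => a) (g j x)) := hξ.snd_map_blockComp e hf hgj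
    _ = ξ m (g j) := hξ.map_unary_comp (hg j) (C.unaryMem_diag hf)

end IsAlmostHom

end CloneOn

theorem stmt_2_general {A : Type*} (C : CloneOn A)
    (ξ : ∀ n : ℕ, ((Fin (n + 1) → A) → A) → Fin (n + 1))
    -- ξ preserves composition with unary members, both from inside and outside
    (halmost : ∀ (n m k : ℕ) (f : (Fin (n + 1) → A) → A) (g : (Fin (m + 1) → A) → A)
      (α γ : A → A) (β : Fin (n + 1) → A → A) (δ : Fin (m + 1) → A → A)
      (σ : Fin (n + 1) → Fin (k + 1)) (τ : Fin (m + 1) → Fin (k + 1)),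
      f ∈ C.ops n → g ∈ C.ops m → C.unaryMem α → C.unaryMem γ →
      (∀ i, C.unaryMem (β i)) → (∀ j, C.unaryMem (δ j)) →
      (∀ x : Fin (k + 1) → A,
        α (f (fun i => β i (x (σ i)))) = γ (g (fun j => δ j (x (τ j))))) →
      σ (ξ n f) = τ (ξ m g)) :
    -- conclusion: ξ is a clone homomorphism
    (∀ (n : ℕ) (i : Fin (n + 1)), ξ n (fun x => x i) = i) ∧
    (∀ (n m : ℕ) (f : (Fin (n + 1) → A) → A)
      (g : Fin (n + 1) → ((Fin (m + 1) → A) → A)),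
      f ∈ C.ops n → (∀ i, g i ∈ C.ops m) →
      ξ m (fun x => f (fun i => g i x)) = ξ m (g (ξ n f))) := by
  have hξ : C.IsAlmostHom ξ := halmost
  exact ⟨fun _ => hξ.map_proj, fun _ _ _ _ hf hg => hξ.map_comp hf hg⟩

/-- An almost clone homomorphism from a function clone to the projection clone
(encoded by the index of the target projection) is a clone homomorphism. -/
theorem stmt_2 {A : Type*} (C : CloneOn A)
    (ξ : ∀ n : ℕ, ((Fin (n + 1) → A) → A) → Fin (n + 1))
    -- ξ preserves height-1 identities
    (h1 : ∀ (n m k : ℕ) (f : (Fin (n + 1) → A) → A) (g : (Fin (m + 1) → A) → A)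
      (σ : Fin (n + 1) → Fin (k + 1)) (τ : Fin (m + 1) → Fin (k + 1)),
      f ∈ C.ops n → g ∈ C.ops m →
      (∀ x : Fin (k + 1) → A, f (x ∘ σ) = g (x ∘ τ)) →
      σ (ξ n f) = τ (ξ m g))
    -- ξ preserves composition with unary members, both from inside and outside
    (halmost : ∀ (n m k : ℕ) (f : (Fin (n + 1) → A) → A) (g : (Fin (m + 1) → A) → A)
      (α γ : A → A) (β : Fin (n + 1) → A → A) (δ : Fin (m + 1) → A → A)
      (σ : Fin (n + 1) → Fin (k + 1)) (τ : Fin (m + 1) → Fin (k + 1)),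
      f ∈ C.ops n → g ∈ C.ops m → C.unaryMem α → C.unaryMem γ →
      (∀ i, C.unaryMem (β i)) → (∀ j, C.unaryMem (δ j)) →
      (∀ x : Fin (k + 1) → A,
        α (f (fun i => β i (x (σ i)))) = γ (g (fun j => δ j (x (τ j))))) →
      σ (ξ n f) = τ (ξ m g)) :
    -- conclusion: ξ is a clone homomorphism
    (∀ (n : ℕ) (i : Fin (n + 1)), ξ n (fun x => x i) = i) ∧
    (∀ (n m : ℕ) (f : (Fin (n + 1) → A) → A)
      (g : Fin (n + 1) → ((Fin (m + 1) → A) → A)),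
      f ∈ C.ops n → (∀ i, g i ∈ C.ops m) →
      ξ m (fun x => f (fun i => g i x)) = ξ m (g (ξ n f))) :=
  stmt_2_general C ξ halmost
end

section
/- Every mapping ξ from the set of ternary operations of a function clone C to the projection clone P on {0,1} that preserves arities and height-1 identities among ternary functions (after variable identifications making composed functions ternary) extends uniquely to an h1 clone homomorphism from all of C to P, where the extension is defined by ξ'(f)(a) := ξ(f_a)(0,1), with f_a the binary function obtained from f by identifying variables according to the 0/1-pattern a. -/
namespace Stmt4Aux

variable {A : Type*} (C : CloneOn A) (ξ : ((Fin 3 → A) → A) → Fin 3)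

/-- The hypothesis on ξ. -/
def HXI : Prop :=
  ∀ (k : ℕ) (f g : (Fin 3 → A) → A) (σ τ : Fin 3 → Fin (k + 1)),
    f ∈ C.ops 2 → g ∈ C.ops 2 →
    (∀ x : Fin (k + 1) → A, f (x ∘ σ) = g (x ∘ τ)) →
    σ (ξ f) = τ (ξ g)

/-- Ternary minor of `f` along pattern `p`. -/
def mnr {n : ℕ} (f : (Fin (n + 1) → A) → A) (p : Fin (n + 1) → Fin 3) :
    (Fin 3 → A) → A := fun x => f (x ∘ p)

lemma mnr_mem {n : ℕ} {f : (Fin (n + 1) → A) → A} (hf : f ∈ C.ops n)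
    (p : Fin (n + 1) → Fin 3) : mnr f p ∈ C.ops 2 :=
  C.comp_mem n 2 f (fun i x => x (p i)) hf (fun i => C.proj_mem 2 (p i))

/-- ξ applied to the ternary minor. -/
def vv {n : ℕ} (f : (Fin (n + 1) → A) → A) (p : Fin (n + 1) → Fin 3) : Fin 3 :=
  ξ (mnr f p)

/-- 0/1 indicator pattern of a finite set. -/
def indF {n : ℕ} (S : Finset (Fin (n + 1))) : Fin (n + 1) → Fin 3 :=
  fun i => if i ∈ S then 0 else 1

lemma fin3cases : ∀ x : Fin 3, x = 0 ∨ x = 1 ∨ x = 2 := by decide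

variable {C ξ}

lemma vv_equiv (hξ : HXI C ξ) {n : ℕ} {f : (Fin (n + 1) → A) → A}
    (hf : f ∈ C.ops n) (p : Fin (n + 1) → Fin 3) (γ : Fin 3 → Fin 3) :
    vv ξ f (γ ∘ p) = γ (vv ξ f p) :=
  (hξ 2 (mnr f p) (mnr f (γ ∘ p)) γ id (mnr_mem C hf p) (mnr_mem C hf _)
    (fun _ => rfl)).symm

lemma vv_cross (hξ : HXI C ξ) {n m k : ℕ} {f : (Fin (n + 1) → A) → A}
    {g : (Fin (m + 1) → A) → A} {σ : Fin (n + 1) → Fin (k + 1)}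
    {τ : Fin (m + 1) → Fin (k + 1)} (hf : f ∈ C.ops n) (hg : g ∈ C.ops m)
    (hid : ∀ x : Fin (k + 1) → A, f (x ∘ σ) = g (x ∘ τ)) (d : Fin (k + 1) → Fin 3) :
    vv ξ f (d ∘ σ) = vv ξ g (d ∘ τ) :=
  hξ 2 (mnr f (d ∘ σ)) (mnr g (d ∘ τ)) id id (mnr_mem C hf _) (mnr_mem C hg _)
    (fun x => hid (x ∘ d))

lemma vv_ind_card (hξ : HXI C ξ) {n : ℕ} {f : (Fin (n + 1) → A) → A}
    (hf : f ∈ C.ops n) (S : Finset (Fin (n + 1))) :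
    (S.filter fun j => vv ξ f (indF {j}) = 0).card
      = if vv ξ f (indF S) = 0 then 1 else 0 := by
  classical
  induction S using Finset.induction_on with
  | empty =>
    have h : indF (∅ : Finset (Fin (n + 1))) = (fun _ => (1 : Fin 3)) ∘ indF ∅ := by
      funext i; simp [indF]
    have h1 : vv ξ f (indF (∅ : Finset (Fin (n + 1)))) = 1 := by
      rw [h, vv_equiv hξ hf]
    simp [h1]
  | @insert a S ha ih =>
    set p : Fin (n + 1) → Fin 3 :=
      fun i => if i = a then 0 else if i ∈ S then 2 else 1 with hp
    have h0 : indF (insert a S) = (fun b : Fin 3 => if b = 1 then 1 else 0) ∘ p := by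
      funext i
      by_cases h1 : i = a
      · simp [indF, hp, h1]
      · by_cases h2 : i ∈ S <;> simp [indF, hp, h1, h2]
    have h1 : indF ({a} : Finset (Fin (n + 1)))
        = (fun b : Fin 3 => if b = 0 then 0 else 1) ∘ p := by
      funext i
      by_cases hia : i = a
      · simp [indF, hp, hia]
      · by_cases h2 : i ∈ S <;> simp [indF, hp, hia, h2]
    have h2 : indF S = (fun b : Fin 3 => if b = 2 then 0 else 1) ∘ p := by
      funext i
      by_cases hia : i = a
      · subst hia; simp [indF, hp, ha]
      · by_cases h2 : i ∈ S <;> simp [indF, hp, hia, h2]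
    have e0 : vv ξ f (indF (insert a S))
        = (fun b : Fin 3 => if b = 1 then 1 else 0) (vv ξ f p) := by
      rw [h0, vv_equiv hξ hf]
    have e1 : vv ξ f (indF ({a} : Finset (Fin (n + 1))))
        = (fun b : Fin 3 => if b = 0 then 0 else 1) (vv ξ f p) := by
      rw [h1, vv_equiv hξ hf]
    have e2 : vv ξ f (indF S)
        = (fun b : Fin 3 => if b = 2 then 0 else 1) (vv ξ f p) := by
      rw [h2, vv_equiv hξ hf]
    rcases fin3cases (vv ξ f p) with hv | hv | hv
    · -- vv p = 0 : a is the chosen one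
      have e0' : vv ξ f (indF (insert a S)) = 0 := by rw [e0, hv]; decide
      have e1' : vv ξ f (indF ({a} : Finset (Fin (n + 1)))) = 0 := by rw [e1, hv]; decide
      have e2' : vv ξ f (indF S) = 1 := by rw [e2, hv]; decide
      rw [e2', if_neg (by decide)] at ih
      rw [Finset.filter_insert, if_pos e1', e0', if_pos rfl,
        Finset.card_insert_of_notMem (fun hmem => ha (Finset.mem_of_mem_filter a hmem)), ih]
    · -- vv p = 1 : nobody in insert a S
      have e0' : vv ξ f (indF (insert a S)) = 1 := by rw [e0, hv]; decide
      have e1' : vv ξ f (indF ({a} : Finset (Fin (n + 1)))) = 1 := by rw [e1, hv]; decide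
      have e2' : vv ξ f (indF S) = 1 := by rw [e2, hv]; decide
      rw [e2', if_neg (by decide)] at ih
      rw [Finset.filter_insert, if_neg (by rw [e1']; decide), e0', if_neg (by decide), ih]
    · -- vv p = 2 : chosen one is in S
      have e0' : vv ξ f (indF (insert a S)) = 0 := by rw [e0, hv]; decide
      have e1' : vv ξ f (indF ({a} : Finset (Fin (n + 1)))) = 1 := by rw [e1, hv]; decide
      have e2' : vv ξ f (indF S) = 0 := by rw [e2, hv]; decide
      rw [e2', if_pos rfl] at ih
      rw [Finset.filter_insert, if_neg (by rw [e1']; decide), e0', if_pos rfl, ih]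

lemma vv_univ (hξ : HXI C ξ) {n : ℕ} {f : (Fin (n + 1) → A) → A}
    (hf : f ∈ C.ops n) : vv ξ f (indF (Finset.univ : Finset (Fin (n + 1)))) = 0 := by
  have h : indF (Finset.univ : Finset (Fin (n + 1)))
      = (fun _ => (0 : Fin 3)) ∘ indF Finset.univ := by
    funext i; simp [indF]
  rw [h, vv_equiv hξ hf]

lemma key (hξ : HXI C ξ) {n : ℕ} {f : (Fin (n + 1) → A) → A} (hf : f ∈ C.ops n) :
    ∃ j, vv ξ f (indF {j}) = 0 ∧ ∀ j', vv ξ f (indF {j'}) = 0 → j' = j := by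
  classical
  have hc := vv_ind_card hξ hf (Finset.univ : Finset (Fin (n + 1)))
  rw [vv_univ hξ hf, if_pos rfl] at hc
  obtain ⟨b, hb⟩ := Finset.card_eq_one.mp hc
  refine ⟨b, ?_, ?_⟩
  · have hbmem : b ∈ Finset.univ.filter fun j => vv ξ f (indF {j}) = 0 := by
      rw [hb]; exact Finset.mem_singleton_self b
    exact (Finset.mem_filter.mp hbmem).2
  · intro j' hj'
    have : j' ∈ Finset.univ.filter fun j => vv ξ f (indF {j}) = 0 :=
      Finset.mem_filter.mpr ⟨Finset.mem_univ _, hj'⟩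
    rw [hb] at this
    exact Finset.mem_singleton.mp this

lemma ind_zero_of_mem (hξ : HXI C ξ) {n : ℕ} {f : (Fin (n + 1) → A) → A}
    (hf : f ∈ C.ops n) {S : Finset (Fin (n + 1))} {j : Fin (n + 1)}
    (hjS : j ∈ S) (hj : vv ξ f (indF {j}) = 0) : vv ξ f (indF S) = 0 := by
  classical
  have hc := vv_ind_card hξ hf S
  have hpos : 0 < (S.filter fun j => vv ξ f (indF {j}) = 0).card :=
    Finset.card_pos.mpr ⟨j, Finset.mem_filter.mpr ⟨hjS, hj⟩⟩
  by_contra h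
  rw [if_neg h] at hc
  omega

lemma mem_of_ind_zero (hξ : HXI C ξ) {n : ℕ} {f : (Fin (n + 1) → A) → A}
    (hf : f ∈ C.ops n) {S : Finset (Fin (n + 1))} {j : Fin (n + 1)}
    (hS : vv ξ f (indF S) = 0) (hj : vv ξ f (indF {j}) = 0) : j ∈ S := by
  classical
  have hc := vv_ind_card hξ hf S
  rw [hS, if_pos rfl] at hc
  obtain ⟨b, hb⟩ := Finset.card_eq_one.mp hc
  have hbmem : b ∈ S.filter fun j => vv ξ f (indF {j}) = 0 := by
    rw [hb]; exact Finset.mem_singleton_self b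
  obtain ⟨j0, _, hu⟩ := key hξ hf
  have h1 : j = j0 := hu j hj
  have h2 : b = j0 := hu b (Finset.mem_filter.mp hbmem).2
  rw [h1, ← h2]
  exact (Finset.mem_filter.mp hbmem).1

variable (ξ)

/-- The extension. -/
noncomputable def extMap : ∀ n : ℕ, ((Fin (n + 1) → A) → A) → Fin (n + 1) :=
  fun _ f => if h : ∃ j, vv ξ f (indF {j}) = 0 then h.choose else 0

lemma extMap_spec (hξ : HXI C ξ) {n : ℕ} {f : (Fin (n + 1) → A) → A}
    (hf : f ∈ C.ops n) : vv ξ f (indF {extMap ξ n f}) = 0 := by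
  obtain ⟨j0, hj0, _⟩ := key hξ hf
  have h : ∃ j, vv ξ f (indF {j}) = 0 := ⟨j0, hj0⟩
  rw [extMap, dif_pos h]
  exact h.choose_spec

lemma extMap_unique (hξ : HXI C ξ) {n : ℕ} {f : (Fin (n + 1) → A) → A}
    (hf : f ∈ C.ops n) {j : Fin (n + 1)} (hj : vv ξ f (indF {j}) = 0) :
    j = extMap ξ n f := by
  obtain ⟨j0, _, hu⟩ := key hξ hf
  rw [hu j hj]
  exact (hu _ (extMap_spec ξ hξ hf)).symm

end Stmt4Aux

open Stmt4Aux in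
/-- Every map from the ternary part of a clone to the projection clone (encoded by the
index of the target projection) preserving height-1 identities among ternary operations
extends uniquely to an h1 clone homomorphism on the whole clone. -/
theorem stmt_4 {A : Type*} (C : CloneOn A)
    (ξ : ((Fin 3 → A) → A) → Fin 3)
    -- ξ preserves height-1 identities among ternary members of the clone
    (hξ : ∀ (k : ℕ) (f g : (Fin 3 → A) → A) (σ τ : Fin 3 → Fin (k + 1)),
      f ∈ C.ops 2 → g ∈ C.ops 2 →
      (∀ x : Fin (k + 1) → A, f (x ∘ σ) = g (x ∘ τ)) →
      σ (ξ f) = τ (ξ g)) :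
    ∃ ξ' : ∀ n : ℕ, ((Fin (n + 1) → A) → A) → Fin (n + 1),
      -- ξ' extends ξ on the ternary members
      (∀ f, f ∈ C.ops 2 → ξ' 2 f = ξ f) ∧
      -- ξ' is an h1 clone homomorphism: it preserves all height-1 identities
      (∀ (n m k : ℕ) (f : (Fin (n + 1) → A) → A) (g : (Fin (m + 1) → A) → A)
        (σ : Fin (n + 1) → Fin (k + 1)) (τ : Fin (m + 1) → Fin (k + 1)),
        f ∈ C.ops n → g ∈ C.ops m →
        (∀ x : Fin (k + 1) → A, f (x ∘ σ) = g (x ∘ τ)) →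
        σ (ξ' n f) = τ (ξ' m g)) ∧
      -- uniqueness: any other such extension agrees with ξ' on the clone
      (∀ ζ : ∀ n : ℕ, ((Fin (n + 1) → A) → A) → Fin (n + 1),
        (∀ f, f ∈ C.ops 2 → ζ 2 f = ξ f) →
        (∀ (n m k : ℕ) (f : (Fin (n + 1) → A) → A) (g : (Fin (m + 1) → A) → A)
          (σ : Fin (n + 1) → Fin (k + 1)) (τ : Fin (m + 1) → Fin (k + 1)),
          f ∈ C.ops n → g ∈ C.ops m →
          (∀ x : Fin (k + 1) → A, f (x ∘ σ) = g (x ∘ τ)) →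
          σ (ζ n f) = τ (ζ m g)) →
        ∀ (n : ℕ) (f : (Fin (n + 1) → A) → A), f ∈ C.ops n → ζ n f = ξ' n f) := by
  classical
  have hx : HXI C ξ := hξ
  refine ⟨Stmt4Aux.extMap ξ, ?_, ?_, ?_⟩
  · -- extension property
    intro f hf
    have hv : vv ξ f (indF {ξ f}) = 0 := by
      have h1 := hx 2 f (mnr f (indF {ξ f})) (indF {ξ f}) id hf
        (mnr_mem C hf _) (fun _ => rfl)
      have h1' : indF {ξ f} (ξ f) = ξ (mnr f (indF {ξ f})) := h1
      have h2 : indF {ξ f} (ξ f) = 0 := by simp [indF]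
      show ξ (mnr f (indF {ξ f})) = 0
      rw [← h1']
      exact h2
    exact (extMap_unique ξ hx hf hv).symm
  · -- homomorphism property
    intro n m k f g σ τ hf hg hid
    set j := Stmt4Aux.extMap ξ n f with hj
    set j' := Stmt4Aux.extMap ξ m g with hj'
    set d : Fin (k + 1) → Fin 3 := fun s => if s = σ j then 0 else 1 with hd
    have hcross := vv_cross hx hf hg hid d
    have hdσ : d ∘ σ = indF (Finset.univ.filter fun i => σ i = σ j) := by
      funext i; simp [indF, hd]
    have hdτ : d ∘ τ = indF (Finset.univ.filter fun i => τ i = σ j) := by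
      funext i; simp [indF, hd]
    rw [hdσ, hdτ] at hcross
    have hl : vv ξ f (indF (Finset.univ.filter fun i => σ i = σ j)) = 0 :=
      ind_zero_of_mem hx hf (Finset.mem_filter.mpr ⟨Finset.mem_univ _, rfl⟩)
        (extMap_spec ξ hx hf)
    rw [hl] at hcross
    have hmem := mem_of_ind_zero hx hg hcross.symm (extMap_spec ξ hx hg)
    exact ((Finset.mem_filter.mp hmem).2).symm
  · -- uniqueness
    intro ζ hζ2 hζhom n f hf
    set p : Fin (n + 1) → Fin 3 := indF {ζ n f} with hp
    have h := hζhom n 2 2 f (mnr f p) p id hf (mnr_mem C hf p) (fun _ => rfl)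
    have h' : p (ζ n f) = ζ 2 (mnr f p) := h
    have h2 : ζ 2 (mnr f p) = ξ (mnr f p) := hζ2 _ (mnr_mem C hf p)
    have h3 : p (ζ n f) = (0 : Fin 3) := by simp [hp, indF]
    have hv : vv ξ f p = 0 := by
      show ξ (mnr f p) = 0
      rw [← h2, ← h', h3]
    exact extMap_unique ξ hx hf hv
end

section
/- The ternary relation R_M = {(0,0,1),(0,1,0),(1,0,0)} on {0,1} is preserved only by projections: every finitary operation on {0,1} that preserves R_M is a projection. -/
/-- The relation of positive 1-in-3-SAT: exactly the triples (0,0,1), (0,1,0), (1,0,0). -/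
def RM (a b c : Bool) : Prop :=
  (a = false ∧ b = false ∧ c = true) ∨
  (a = false ∧ b = true ∧ c = false) ∨
  (a = true ∧ b = false ∧ c = false)

lemma RM_iff_bool (a b c : Bool) :
    RM a b c ↔ ((!a && !b && c) || (!a && b && !c) || (a && !b && !c)) = true := by
  cases a <;> cases b <;> cases c <;> simp [RM]

/-- Every finitary operation on `{0,1}` preserving `RM` is a projection. -/
theorem stmt_5 {n : ℕ} (f : (Fin n → Bool) → Bool)
    (hf : ∀ u v w : Fin n → Bool,
      (∀ i, RM (u i) (v i) (w i)) → RM (f u) (f v) (f w)) :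
    ∃ i : Fin n, f = fun x => x i := by
  classical
  -- boolean form of preservation
  have hf' : ∀ u v w : Fin n → Bool,
      (∀ i, ((!(u i) && !(v i) && w i) || (!(u i) && v i && !(w i)) ||
        (u i && !(v i) && !(w i))) = true) →
      ((!(f u) && !(f v) && f w) || (!(f u) && f v && !(f w)) ||
        (f u && !(f v) && !(f w))) = true := by
    intro u v w h
    rw [← RM_iff_bool]
    exact hf u v w (fun i => (RM_iff_bool _ _ _).2 (h i))
  have h01 := hf' (fun _ => true) (fun _ => false) (fun _ => false) (fun i => rfl)
  have h0 : f (fun _ => false) = false := by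
    cases h : f (fun _ => false) with
    | false => rfl
    | true => simp [h] at h01
  have h1 : f (fun _ => true) = true := by
    cases h : f (fun _ => true) with
    | true => rfl
    | false => simp [h, h0] at h01
  -- f commutes with negation
  have hneg : ∀ x : Fin n → Bool, f (fun i => !(x i)) = !(f x) := by
    intro x
    have hp := hf' x (fun i => !(x i)) (fun _ => false) (fun i => by cases hx : x i <;> simp [hx])
    cases hx : f x <;> cases hy : f (fun i => !(x i)) <;> simp_all
  -- monotonicity
  have hmono : ∀ x y : Fin n → Bool, (∀ i, x i = true → y i = true) →
      f x = true → f y = true := by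
    intro x y hsub hx
    have hp := hf' x (fun i => y i && !(x i)) (fun i => !(y i))
      (fun i => by
        have := hsub i
        cases hxi : x i <;> cases hyi : y i <;> simp_all)
    have hny := hneg y
    cases hy : f y with
    | true => rfl
    | false =>
      rw [hy] at hny
      simp [hx, hny] at hp
  -- all-false inputs give false
  have hzero : ∀ x : Fin n → Bool, (∀ i, x i = false) → f x = false := by
    intro x hx
    have : x = fun _ => false := funext hx
    rw [this, h0]
  -- main induction: from any true input, extract a true "unit vector"
  have main : ∀ k : ℕ, ∀ x : Fin n → Bool,
      (Finset.univ.filter (fun i => x i = true)).card ≤ k → f x = true →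
      ∃ i : Fin n, f (fun j => decide (j = i)) = true := by
    intro k
    induction k with
    | zero =>
      intro x hc hx
      have hall : ∀ i, x i = false := by
        intro i
        by_contra hcon
        have hi : x i = true := by cases h : x i <;> simp_all
        have : i ∈ Finset.univ.filter (fun i => x i = true) := by simp [hi]
        have := Finset.card_pos.2 ⟨i, this⟩
        omega
      rw [hzero x hall] at hx
      exact absurd hx (by simp)
    | succ k ih =>
      intro x hc hx
      by_cases hex : ∃ i, x i = true
      · obtain ⟨i, hi⟩ := hex
        have hp := hf' (fun j => decide (j = i)) (fun j => x j && !(decide (j = i)))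
          (fun j => !(x j))
          (fun j => by
            by_cases hj : j = i
            · subst hj; simp [hi]
            · simp [hj])
        have hnx := hneg x
        rw [hx] at hnx
        cases hei : f (fun j => decide (j = i)) with
        | true => exact ⟨i, hei⟩
        | false =>
          have hx' : f (fun j => x j && !(decide (j = i))) = true := by
            simpa [hei, hnx] using hp
          apply ih (fun j => x j && !(decide (j = i))) _ hx'
          have hset : Finset.univ.filter (fun j => (x j && !(decide (j = i))) = true)
              = (Finset.univ.filter (fun j => x j = true)).erase i := by
            ext j
            simp [Finset.mem_erase, and_comm]
          rw [hset]
          have hmem : i ∈ Finset.univ.filter (fun j => x j = true) := by simp [hi]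
          rw [Finset.card_erase_of_mem hmem]
          omega
      · push_neg at hex
        have hall : ∀ i, x i = false := by
          intro i; cases h : x i
          · rfl
          · exact absurd h (hex i)
        rw [hzero x hall] at hx
        exact absurd hx (by simp)
  obtain ⟨i, hi⟩ := main (Finset.univ.filter (fun i : Fin n => (true : Bool) = true)).card
    (fun _ => true) le_rfl h1
  refine ⟨i, funext fun x => ?_⟩
  cases hxi : x i with
  | true =>
    exact hmono (fun j => decide (j = i)) x
      (fun j hj => by simp at hj; subst hj; exact hxi) hi
  | false =>
    have : f (fun j => !(x j)) = true := by
      apply hmono (fun j => decide (j = i)) _ (fun j hj => by simp at hj; subst hj; simp [hxi]) hi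
    rw [hneg x] at this
    cases h : f x
    · rfl
    · rw [h] at this; simp at this
end

section
/- Every polymorphism of the complete graph K_3 on three vertices is essentially unary, i.e., depends on at most one of its arguments. -/
/-- In a "triangle" of mutually cross-constrained unary maps on `Fin 3`,
each map is constant or injective. -/
lemma tri3 : ∀ p q m : Fin 3 → Fin 3,
    (∀ x y, x ≠ y → p x ≠ q y) → (∀ x y, x ≠ y → q x ≠ m y) →
    (∀ x y, x ≠ y → p x ≠ m y) → (∀ x y, p x = p y) ∨ Function.Injective p := by
  decide

/-- An injective unary map cross-constrained with another forces equality. -/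
lemma cross_eq3 : ∀ p q : Fin 3 → Fin 3, Function.Injective p →
    (∀ x y, x ≠ y → p x ≠ q y) → p = q := by
  decide

/-- A value distinct from two given values of `Fin 3`. -/
def pick3 (a b : Fin 3) : Fin 3 :=
  if a ≠ 0 ∧ b ≠ 0 then 0 else if a ≠ 1 ∧ b ≠ 1 then 1 else 2

lemma pick3_ne : ∀ a b : Fin 3, pick3 a b ≠ a ∧ pick3 a b ≠ b := by decide

lemma rot3 : ∀ a : Fin 3, a ≠ a + 1 ∧ a ≠ a + 2 ∧ a + 1 ≠ a + 2 := by decide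

/-- Every polymorphism of `K₃` depends on at most one of its arguments: if it depends on
the `i`-th and on the `j`-th argument, then `i = j`. -/
theorem stmt_6 {n : ℕ} (f : (Fin n → Fin 3) → Fin 3)
    -- f is a polymorphism of K₃ = ({1,2,3}; ≠)
    (hf : ∀ u v : Fin n → Fin 3, (∀ i, u i ≠ v i) → f u ≠ f v)
    (i j : Fin n)
    -- f depends on its i-th argument
    (hi : ∃ u v : Fin n → Fin 3, (∀ k, k ≠ i → u k = v k) ∧ f u ≠ f v)
    -- f depends on its j-th argument
    (hj : ∃ u v : Fin n → Fin 3, (∀ k, k ≠ j → u k = v k) ∧ f u ≠ f v) :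
    i = j := by
  by_contra hij
  obtain ⟨u, v, huv, hfuv⟩ := hi
  obtain ⟨u', v', huv', hfuv'⟩ := hj
  -- the unary slice maps
  set Φ : (Fin n → Fin 3) → Fin 3 → Fin 3 :=
    fun r x => f (Function.update r i x) with hΦ
  have cross : ∀ r s : Fin n → Fin 3, (∀ k, k ≠ i → r k ≠ s k) →
      ∀ x y, x ≠ y → Φ r x ≠ Φ s y := by
    intro r s hrs x y hxy
    apply hf
    intro k
    rcases eq_or_ne k i with rfl | hk
    · simpa using hxy
    · simpa [Function.update_of_ne hk] using hrs k hk
  -- Φ u is not constant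
  have hupd1 : Function.update u i (u i) = u := Function.update_eq_self _ _
  have hupd2 : Function.update u i (v i) = v := by
    funext k
    rcases eq_or_ne k i with rfl | hk
    · simp
    · simp [Function.update_of_ne hk, huv k hk]
  have hnc : ¬ ∀ x y, Φ u x = Φ u y := by
    intro hc
    exact hfuv (by simpa [hΦ, hupd1, hupd2] using hc (u i) (v i))
  -- triangle argument: Φ u is injective
  have hpinj : Function.Injective (Φ u) := by
    rcases tri3 (Φ u) (Φ (fun k => u k + 1)) (Φ (fun k => u k + 2))
        (cross _ _ fun k _ => (rot3 (u k)).1)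
        (cross _ _ fun k _ => (rot3 (u k)).2.2)
        (cross _ _ fun k _ => (rot3 (u k)).2.1) with hc | hinj
    · exact absurd hc hnc
    · exact hinj
  -- Φ is globally equal to Φ u, hence f w = Φ u (w i)
  have key : ∀ w, f w = Φ u (w i) := by
    intro w
    set z : Fin n → Fin 3 := fun k => pick3 (u k) (w k) with hz
    have h1 : Φ u = Φ z :=
      cross_eq3 _ _ hpinj (cross u z fun k _ => (pick3_ne (u k) (w k)).1.symm)
    have h2 : Φ z = Φ w :=
      cross_eq3 _ _ (h1 ▸ hpinj) (cross z w fun k _ => (pick3_ne (u k) (w k)).2)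
    have h3 : f w = Φ w (w i) := by
      simp [hΦ, Function.update_eq_self]
    rw [h3, ← h2, ← h1]
  -- contradiction with dependence on j
  exact hfuv' (by rw [key u', key v', huv' i hij])
end

section
/- There exists a continuous clone homomorphism from Pol(K_3) to the projection clone: since every polymorphism of K_3 is essentially unary, the map sending each polymorphism to the projection onto the (unique) coordinate on which it depends (and constant-free: each polymorphism of K_3 depends on exactly one coordinate) is a clone homomorphism. -/
/-- `f` is a polymorphism of `K₃ = ({1,2,3}; ≠)`. -/
def IsPolyK3 {n : ℕ} (f : (Fin n → Fin 3) → Fin 3) : Prop :=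
  ∀ u v : Fin n → Fin 3, (∀ i, u i ≠ v i) → f u ≠ f v

/-- `f` depends on its `i`-th argument. -/
def K3DependsOn {n : ℕ} (f : (Fin n → Fin 3) → Fin 3) (i : Fin n) : Prop :=
  ∃ u v : Fin n → Fin 3, (∀ k, k ≠ i → u k = v k) ∧ f u ≠ f v

/-!
Every polymorphism `f` of `K₃` is essentially unary, `f x = σ (x i)` with `σ` a permutation; then `i`
is the only coordinate `f` depends on, and projections and composites visibly respect it.

The unary case is trivial. For binary `f` and `a ≠ b`, `f (a, b)` avoids `f (c, c)` for the third
value `c`, so it is `f (a, a)` or `f (b, b)`; adjacency of `(a, b)` with `(b, a)` and with `(c, a)`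
forces the same choice for all pairs. In arity at least three, identifying two coordinates `p`, `q`
gives a polymorphism of smaller arity, essentially unary by induction. If it reads a coordinate
other than the merged one, so does `f`; otherwise `f x = f (x q, …, x q)` whenever `x p = x q`, and
this cannot hold for all three pairs among three coordinates.
-/

open Function

namespace K3

lemma exists_ne_and_ne (a b : Fin 3) : ∃ c, c ≠ a ∧ c ≠ b := by
  revert a b; decide

lemma eq_or_eq_of_ne_third {a b c d : Fin 3} (hab : a ≠ b) (hca : c ≠ a) (hcb : c ≠ b)
    (hdc : d ≠ c) : d = a ∨ d = b := by
  revert a b c d; decide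

variable {n : ℕ}

def diag (f : (Fin n → Fin 3) → Fin 3) (a : Fin 3) : Fin 3 := f fun _ => a

lemma diag_eq_two (f : (Fin 2 → Fin 3) → Fin 3) (a : Fin 3) : diag f a = f ![a, a] :=
  congrArg f (funext fun i => by fin_cases i <;> rfl)

def IsEssUnaryAt (f : (Fin n → Fin 3) → Fin 3) (i : Fin n) : Prop :=
  ∃ σ : Fin 3 → Fin 3, Injective σ ∧ ∀ x, f x = σ (x i)

lemma isEssUnaryAt_proj (i : Fin n) : IsEssUnaryAt (fun x => x i) i :=
  ⟨id, injective_id, fun _ => rfl⟩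

lemma IsEssUnaryAt.comp {m : ℕ} {f : (Fin n → Fin 3) → Fin 3} {g : Fin n → (Fin m → Fin 3) → Fin 3}
    {i : Fin n} {j : Fin m} (hf : IsEssUnaryAt f i) (hg : IsEssUnaryAt (g i) j) :
    IsEssUnaryAt (fun x => f fun k => g k x) j := by
  obtain ⟨σ, hσ, hf⟩ := hf
  obtain ⟨τ, hτ, hg⟩ := hg
  exact ⟨σ ∘ τ, hσ.comp hτ, fun x => (hf _).trans (congrArg σ (hg x))⟩

lemma IsEssUnaryAt.dependsOn {f : (Fin n → Fin 3) → Fin 3} {i : Fin n} (hf : IsEssUnaryAt f i) :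
    K3DependsOn f i := by
  obtain ⟨σ, hσ, hf⟩ := hf
  refine ⟨fun _ => 0, update (fun _ => 0) i 1, fun k hk => by rw [update_of_ne hk], ?_⟩
  rw [hf, hf, update_self]
  exact hσ.ne (by decide)

lemma IsEssUnaryAt.eq_of_dependsOn {f : (Fin n → Fin 3) → Fin 3} {i j : Fin n}
    (hf : IsEssUnaryAt f i) (hj : K3DependsOn f j) : j = i := by
  obtain ⟨σ, -, hf⟩ := hf
  obtain ⟨u, v, huv, hne⟩ := hj
  by_contra hji
  exact hne (by rw [hf, hf, huv i (Ne.symm hji)])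

end K3

namespace IsPolyK3

open K3

variable {n : ℕ} {f : (Fin n → Fin 3) → Fin 3}

lemma diag_injective (hf : IsPolyK3 f) : Injective (diag f) :=
  fun _ _ hab => by_contra fun hne => hf _ _ (fun _ => hne) hab

lemma diag_surjective (hf : IsPolyK3 f) : Surjective (diag f) :=
  Finite.surjective_of_injective hf.diag_injective

lemma comp_minor {m : ℕ} (hf : IsPolyK3 f) (φ : Fin n → Fin m) :
    IsPolyK3 fun y : Fin m → Fin 3 => f (y ∘ φ) :=
  fun _ _ huv => hf _ _ fun i => huv (φ i)

section Binary

variable {f : (Fin 2 → Fin 3) → Fin 3}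

lemma ne_of_ne_of_ne (hf : IsPolyK3 f) {a b c d : Fin 3} (hac : a ≠ c) (hbd : b ≠ d) :
    f ![a, b] ≠ f ![c, d] :=
  hf _ _ (Fin.forall_fin_two.2 ⟨hac, hbd⟩)

lemma eq_diag_or_eq_diag (hf : IsPolyK3 f) {a b : Fin 3} (hab : a ≠ b) :
    f ![a, b] = diag f a ∨ f ![a, b] = diag f b := by
  obtain ⟨c, hca, hcb⟩ := exists_ne_and_ne a b
  obtain ⟨d, hd⟩ := hf.diag_surjective (f ![a, b])
  have hdc : d ≠ c := by
    rintro rfl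
    exact hf.ne_of_ne_of_ne hca.symm hcb.symm (hd.symm.trans (diag_eq_two f d))
  rcases eq_or_eq_of_ne_third hab hca hcb hdc with rfl | rfl
  exacts [Or.inl hd.symm, Or.inr hd.symm]

lemma eq_diag_snd_of_eq_diag_fst (hf : IsPolyK3 f) {a b : Fin 3} (hab : a ≠ b)
    (h : f ![a, b] = diag f a) : f ![b, a] = diag f b :=
  (hf.eq_diag_or_eq_diag hab.symm).resolve_right fun h' =>
    hf.ne_of_ne_of_ne hab.symm hab (h'.trans h.symm)

-- The alternative `f ![a, c] = diag f c` would force `f ![c, a] = diag f a = f ![a, b]`.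
lemma eq_diag_fst_of_eq_diag_fst (hf : IsPolyK3 f) {a b c : Fin 3} (hab : a ≠ b) (hac : a ≠ c)
    (h : f ![a, b] = diag f a) : f ![a, c] = diag f a := by
  refine (hf.eq_diag_or_eq_diag hac).resolve_right fun h' => ?_
  have hca : f ![c, a] = diag f a :=
    (hf.eq_diag_or_eq_diag hac.symm).resolve_left fun h'' =>
      hf.ne_of_ne_of_ne hac.symm hac (h''.trans h'.symm)
  exact hf.ne_of_ne_of_ne hac hab.symm (h.trans hca.symm)

lemma eq_diag_fst_of_eq_diag_fst' (hf : IsPolyK3 f) {a b a' b' : Fin 3} (hab : a ≠ b)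
    (hab' : a' ≠ b') (h : f ![a, b] = diag f a) : f ![a', b'] = diag f a' := by
  by_cases haa' : a = a'
  · subst haa'
    exact hf.eq_diag_fst_of_eq_diag_fst hab hab' h
  · have h' := hf.eq_diag_snd_of_eq_diag_fst haa' (hf.eq_diag_fst_of_eq_diag_fst hab haa' h)
    exact hf.eq_diag_fst_of_eq_diag_fst (Ne.symm haa') hab' h'

lemma isEssUnaryAt_of_two (hf : IsPolyK3 f) : ∃ i, IsEssUnaryAt f i := by
  have hx : ∀ x : Fin 2 → Fin 3, f x = f ![x 0, x 1] :=
    fun x => congrArg f (funext fun i => by fin_cases i <;> rfl)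
  by_cases h01 : f ![0, 1] = diag f 0
  · refine ⟨0, diag f, hf.diag_injective, fun x => ?_⟩
    rw [hx]
    by_cases hx01 : x 0 = x 1
    · rw [hx01, diag_eq_two]
    · exact hf.eq_diag_fst_of_eq_diag_fst' (by decide) hx01 h01
  · refine ⟨1, diag f, hf.diag_injective, fun x => ?_⟩
    rw [hx]
    by_cases hx01 : x 0 = x 1
    · rw [hx01, diag_eq_two]
    · refine (hf.eq_diag_or_eq_diag hx01).resolve_left fun h => h01 ?_
      exact hf.eq_diag_fst_of_eq_diag_fst' hx01 (by decide) h

end Binary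

section Minor

variable {k : ℕ} {f : (Fin (k + 2) → Fin 3) → Fin 3} {q : Fin (k + 2)} {p' : Fin (k + 1)}

lemma isEssUnaryAt_of_minor (hf : IsPolyK3 f) {j : Fin (k + 1)} (hj : j ≠ p')
    (hm : IsEssUnaryAt (fun y => f (y ∘ q.insertNth p' id)) j) :
    IsEssUnaryAt f (q.succAbove j) := by
  obtain ⟨σ, hσ, hm⟩ := hm
  refine ⟨σ, hσ, fun u => ?_⟩
  obtain ⟨b, hb⟩ := Finite.surjective_of_injective hσ (f u)
  rw [← hb]
  congr 1
  by_contra hbu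
  choose c hc using fun i => exists_ne_and_ne (u (q.succAbove i)) (u q)
  refine hf (update c j b ∘ q.insertNth p' id) u ?_ ((hm _).trans (by rw [update_self, hb]))
  refine (Fin.forall_iff_succAbove q).2 ⟨?_, fun i => ?_⟩
  · simpa [update_of_ne hj.symm] using (hc p').2
  · by_cases hij : i = j
    · subst hij; simpa using hbu
    · simpa [update_of_ne hij] using (hc i).1

lemma eq_diag_of_minor (hm : IsEssUnaryAt (fun y => f (y ∘ q.insertNth p' id)) p') :
    ∀ x, x (q.succAbove p') = x q → f x = diag f (x q) := by
  obtain ⟨σ, -, hm⟩ := hm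
  have hσ : ∀ x, x (q.succAbove p') = x q → f x = σ (x q) := by
    intro x hx
    have hx' : (x ∘ q.succAbove) ∘ q.insertNth p' id = x :=
      funext ((Fin.forall_iff_succAbove q).2 ⟨by simp [hx], by simp⟩)
    simpa [hx', hx] using hm (x ∘ q.succAbove)
  intro x hx
  rw [hσ x hx, diag, hσ _ rfl]

end Minor

lemma isEssUnaryAt_or_eq_diag {k : ℕ} {f : (Fin (k + 2) → Fin 3) → Fin 3} (hf : IsPolyK3 f)
    (ih : ∀ g : (Fin (k + 1) → Fin 3) → Fin 3, IsPolyK3 g → ∃ i, IsEssUnaryAt g i)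
    {p q : Fin (k + 2)} (hpq : p ≠ q) :
    (∃ i, IsEssUnaryAt f i) ∨ ∀ x, x p = x q → f x = diag f (x q) := by
  obtain ⟨p', rfl⟩ := Fin.exists_succAbove_eq hpq
  obtain ⟨j, hj⟩ := ih _ (hf.comp_minor (q.insertNth p' id))
  by_cases hjp : j = p'
  · subst hjp
    exact Or.inr (eq_diag_of_minor hj)
  · exact Or.inl ⟨_, hf.isEssUnaryAt_of_minor hjp hj⟩

-- The points `(1,0,0)`, `(1,0,1)`, `(2,2,0)` on the three diagonals take the three values of `f`,
-- yet all of them are adjacent to `(0,1,2)`.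
lemma false_of_eq_diag_of_eq_diag_of_eq_diag (hf : IsPolyK3 f) {a b c : Fin n}
    (hab : a ≠ b) (hac : a ≠ c) (hbc : b ≠ c)
    (h_bc : ∀ x, x b = x c → f x = diag f (x c)) (h_ac : ∀ x, x a = x c → f x = diag f (x c))
    (h_ab : ∀ x, x a = x b → f x = diag f (x b)) : False := by
  let v (r s t w : Fin 3) (i : Fin n) : Fin 3 :=
    if i = a then r else if i = b then s else if i = c then t else w
  have hv : ∀ r s t w, v r s t w a = r ∧ v r s t w b = s ∧ v r s t w c = t := by
    simp [v, hab.symm, hac.symm, hbc.symm]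
  have hadj : ∀ {r s t w r' s' t' w'}, r ≠ r' → s ≠ s' → t ≠ t' → w ≠ w' →
      ∀ i, v r s t w i ≠ v r' s' t' w' i := by
    intro _ _ _ _ _ _ _ _ hr hs ht hw i
    simp only [v]
    split_ifs <;> assumption
  have h0 : f (v 1 0 0 0) = diag f 0 := by
    simpa [(hv _ _ _ _).2.2] using h_bc _ ((hv 1 0 0 0).2.1.trans (hv 1 0 0 0).2.2.symm)
  have h1 : f (v 1 0 1 0) = diag f 1 := by
    simpa [(hv _ _ _ _).2.2] using h_ac _ ((hv 1 0 1 0).1.trans (hv 1 0 1 0).2.2.symm)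
  have h2 : f (v 2 2 0 1) = diag f 2 := by
    simpa [(hv _ _ _ _).2.1] using h_ab _ ((hv 2 2 0 1).1.trans (hv 2 2 0 1).2.1.symm)
  obtain ⟨d, hd⟩ := hf.diag_surjective (f (v 0 1 2 2))
  fin_cases d
  · exact hf _ _ (hadj (by decide) (by decide) (by decide) (by decide)) (h0.trans hd)
  · exact hf _ _ (hadj (by decide) (by decide) (by decide) (by decide)) (h1.trans hd)
  · exact hf _ _ (hadj (by decide) (by decide) (by decide) (by decide)) (h2.trans hd)

theorem exists_isEssUnaryAt {n : ℕ} {f : (Fin (n + 1) → Fin 3) → Fin 3} (hf : IsPolyK3 f) :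
    ∃ i, IsEssUnaryAt f i := by
  induction n with
  | zero => exact ⟨0, diag f, hf.diag_injective, fun x => congrArg f (funext fun i => by
      rw [Fin.fin_one_eq_zero i])⟩
  | succ n ih =>
    cases n with
    | zero => exact hf.isEssUnaryAt_of_two
    | succ k =>
      have h01 : (0 : Fin (k + 3)) ≠ 1 := by simp
      have h02 : (0 : Fin (k + 3)) ≠ 2 := by simp [Fin.ext_iff, Nat.mod_eq_of_lt]
      have h12 : (1 : Fin (k + 3)) ≠ 2 := by simp [Fin.ext_iff, Nat.mod_eq_of_lt]
      rcases hf.isEssUnaryAt_or_eq_diag (fun _ => ih) h12 with h | h_bc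
      · exact h
      rcases hf.isEssUnaryAt_or_eq_diag (fun _ => ih) h02 with h | h_ac
      · exact h
      rcases hf.isEssUnaryAt_or_eq_diag (fun _ => ih) h01 with h | h_ab
      · exact h
      exact (hf.false_of_eq_diag_of_eq_diag_of_eq_diag h01 h02 h12 h_bc h_ac h_ab).elim

end IsPolyK3

namespace K3

open Classical in
noncomputable def essCoord (n : ℕ) (f : (Fin (n + 1) → Fin 3) → Fin 3) : Fin (n + 1) :=
  if h : ∃ i, K3DependsOn f i then h.choose else 0

lemma IsEssUnaryAt.essCoord_eq {n : ℕ} {f : (Fin (n + 1) → Fin 3) → Fin 3} {i : Fin (n + 1)}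
    (hf : IsEssUnaryAt f i) : essCoord n f = i := by
  have h : ∃ j, K3DependsOn f j := ⟨i, hf.dependsOn⟩
  rw [essCoord, dif_pos h]
  exact hf.eq_of_dependsOn h.choose_spec

end K3

/-- There is a clone homomorphism from Pol(K₃) to the projection clone (encoded by the
index of the target projection), sending each polymorphism to the projection onto the
coordinate on which it depends. -/
theorem stmt_7 :
    ∃ ξ : ∀ n : ℕ, ((Fin (n + 1) → Fin 3) → Fin 3) → Fin (n + 1),
      -- each polymorphism is sent to (the projection onto) the coordinate it depends on
      (∀ (n : ℕ) (f : (Fin (n + 1) → Fin 3) → Fin 3),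
        IsPolyK3 f → K3DependsOn f (ξ n f)) ∧
      -- ξ preserves projections
      (∀ (n : ℕ) (i : Fin (n + 1)), ξ n (fun x => x i) = i) ∧
      -- ξ preserves composition (on polymorphisms)
      (∀ (n m : ℕ) (f : (Fin (n + 1) → Fin 3) → Fin 3)
        (g : Fin (n + 1) → ((Fin (m + 1) → Fin 3) → Fin 3)),
        IsPolyK3 f → (∀ i, IsPolyK3 (g i)) →
        ξ m (fun x => f (fun i => g i x)) = ξ m (g (ξ n f))) := by
  refine ⟨K3.essCoord, fun n f hf => ?_, fun n i => (K3.isEssUnaryAt_proj i).essCoord_eq,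
    fun n m f g hf hg => ?_⟩
  · obtain ⟨i, hi⟩ := hf.exists_isEssUnaryAt
    rw [hi.essCoord_eq]
    exact hi.dependsOn
  · obtain ⟨i, hi⟩ := hf.exists_isEssUnaryAt
    obtain ⟨j, hj⟩ := (hg i).exists_isEssUnaryAt
    rw [hi.essCoord_eq, hj.essCoord_eq, (hi.comp hj).essCoord_eq]
end

section
/- Let T be the set of terms over variables x_1,…,x_n in the signature {p, q, r, s} (p, q unary; r, s binary). Define θ : T → {1,…,n} by θ(x_i) = i, θ(q(r(z_1,z_2))) = θ(z_2), and θ(f(z_1,…,z_l)) = θ(z_1) in all other cases. Then θ is invariant under the rewriting rules generated by the identities p r(x,y) ≈ p s(x,y) and q r(x,y) ≈ q s(y,x): if two terms are equal modulo these identities and neither has outermost symbol r, they have the same θ-value; moreover θ(α(t(β_1(x_{i_1}),…,β_n(x_{i_n})))) = i_{θ(t)} whenever t's outermost symbol is not r, where α, β_j are (possibly empty) words in {p,q}. -/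
/-- Terms over variables `x₁,…,xₙ` in the signature {p, q (unary); r, s (binary)}. -/
inductive Tm (n : ℕ) where
  | var : Fin n → Tm n
  | p : Tm n → Tm n
  | q : Tm n → Tm n
  | r : Tm n → Tm n → Tm n
  | s : Tm n → Tm n → Tm n

/-- θ picks the index of the leftmost variable after rewriting each subterm
`q (r z₁ z₂)` to `q (s z₂ z₁)`. -/
def theta {n : ℕ} : Tm n → Fin n
  | .var i => i
  | .p t => theta t
  | .q (.r _ z2) => theta z2
  | .q t => theta t
  | .r z1 _ => theta z1
  | .s z1 _ => theta z1

/-- The equational theory generated by p r(x,y) ≈ p s(x,y) and q r(x,y) ≈ q s(y,x). -/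
inductive Eqv {n : ℕ} : Tm n → Tm n → Prop
  | pr (t u : Tm n) : Eqv (.p (.r t u)) (.p (.s t u))
  | qr (t u : Tm n) : Eqv (.q (.r t u)) (.q (.s u t))
  | refl (t : Tm n) : Eqv t t
  | symm {t u : Tm n} : Eqv t u → Eqv u t
  | trans {t u v : Tm n} : Eqv t u → Eqv u v → Eqv t v
  | congrP {t u : Tm n} : Eqv t u → Eqv (.p t) (.p u)
  | congrQ {t u : Tm n} : Eqv t u → Eqv (.q t) (.q u)
  | congrR {t₁ u₁ t₂ u₂ : Tm n} : Eqv t₁ u₁ → Eqv t₂ u₂ → Eqv (.r t₁ t₂) (.r u₁ u₂)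
  | congrS {t₁ u₁ t₂ u₂ : Tm n} : Eqv t₁ u₁ → Eqv t₂ u₂ → Eqv (.s t₁ t₂) (.s u₁ u₂)

/-- The outermost symbol of the term is `r`. -/
def isR {n : ℕ} : Tm n → Prop
  | .r _ _ => True
  | _ => False

/-- Substitution of terms for variables. -/
def subst {n m : ℕ} : Tm n → (Fin n → Tm m) → Tm m
  | .var i, σ => σ i
  | .p t, σ => .p (subst t σ)
  | .q t, σ => .q (subst t σ)
  | .r t u, σ => .r (subst t σ) (subst u σ)
  | .s t u, σ => .s (subst t σ) (subst u σ)

/-- A word over {p, q} applied to a term (`true` ↦ p, `false` ↦ q). -/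
def applyWord {m : ℕ} : List Bool → Tm m → Tm m
  | [], t => t
  | (b :: w), t => if b then .p (applyWord w t) else .q (applyWord w t)

/-!
Both rules turn an `r` into an `s` only directly below `p` or `q`, so they cannot change θ as long
as one also tracks what θ becomes below a `q`: the pair `(θ t, θ (q t))` is invariant under each
rule and each congruence step. For substitution instances, θ follows the leftmost path of `t`
(switching to the right argument below `q r`) into some `β_j(x_{i_j})`, and a word over `{p, q}`
never changes θ of a term whose head is not `r`.
-/

lemma theta_p {n : ℕ} (t : Tm n) : theta (.p t) = theta t := by
  cases t <;> rfl

lemma theta_q_of_not_isR {n : ℕ} {t : Tm n} (ht : ¬ isR t) : theta (.q t) = theta t := by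
  cases t with
  | r => exact absurd trivial ht
  | _ => rfl

lemma Eqv.theta_eq_and_theta_q_eq {n : ℕ} {t u : Tm n} (h : Eqv t u) :
    theta t = theta u ∧ theta (.q t) = theta (.q u) := by
  induction h with
  | pr | qr | refl => exact ⟨rfl, rfl⟩
  | symm _ ih => exact ⟨ih.1.symm, ih.2.symm⟩
  | trans _ _ ih₁ ih₂ => exact ⟨ih₁.1.trans ih₂.1, ih₁.2.trans ih₂.2⟩
  | @congrP t u _ ih =>
    have h : theta (.p t) = theta (.p u) := by rw [theta_p, theta_p, ih.1]
    exact ⟨h, h⟩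
  | congrQ _ ih => exact ⟨ih.2, ih.2⟩
  | congrR _ _ ih₁ ih₂ => exact ⟨ih₁.1, ih₂.1⟩
  | congrS _ _ ih₁ _ => exact ⟨ih₁.1, ih₁.1⟩

lemma not_isR_applyWord {m : ℕ} (w : List Bool) {u : Tm m} (hu : ¬ isR u) :
    ¬ isR (applyWord w u) := by
  cases w with
  | nil => exact hu
  | cons b w => cases b <;> exact id

lemma theta_applyWord {m : ℕ} (w : List Bool) {u : Tm m} (hu : ¬ isR u) :
    theta (applyWord w u) = theta u := by
  induction w with
  | nil => rfl
  | cons b w ih =>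
    cases b with
    | true => exact (theta_p _).trans ih
    | false => exact (theta_q_of_not_isR (not_isR_applyWord w hu)).trans ih

section Subst

variable {n m : ℕ} {σ : Fin n → Tm m}

lemma not_isR_subst (hσ : ∀ j, ¬ isR (σ j)) {t : Tm n} (ht : ¬ isR t) : ¬ isR (subst t σ) := by
  cases t with
  | var j => exact hσ j
  | r => exact absurd trivial ht
  | _ => exact id

lemma theta_subst (hσ : ∀ j, ¬ isR (σ j)) : ∀ t : Tm n, theta (subst t σ) = theta (σ (theta t))
  | .var _ => rfl
  | .p t => by rw [subst, theta_p, theta_p, theta_subst hσ t]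
  | .q (.r _ b) => theta_subst hσ b
  | .q (.var j) => theta_q_of_not_isR (hσ j)
  | .q (.p t) => theta_subst hσ (.p t)
  | .q (.q t) => theta_subst hσ (.q t)
  | .q (.s a b) => theta_subst hσ (.s a b)
  | .r a _ => theta_subst hσ a
  | .s a _ => theta_subst hσ a

end Subst

/-- θ is invariant under the equational theory (on terms whose outermost symbol is not r),
and computes correctly on terms obtained by substituting unary words applied to
variables and applying an outer unary word. -/
theorem stmt_12 {n m : ℕ} :
    (∀ t u : Tm n, Eqv t u → ¬ isR t → ¬ isR u → theta t = theta u) ∧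
    (∀ (t : Tm n) (α : List Bool) (β : Fin n → List Bool) (idx : Fin n → Fin m),
      ¬ isR t →
      theta (applyWord α (subst t (fun j => applyWord (β j) (Tm.var (idx j))))) =
        idx (theta t)) := by
  refine ⟨fun t u h _ _ => h.theta_eq_and_theta_q_eq.1, fun t α β idx ht => ?_⟩
  have hσ : ∀ j, ¬ isR (applyWord (β j) (Tm.var (idx j))) :=
    fun j => not_isR_applyWord (β j) id
  rw [theta_applyWord α (not_isR_subst hσ ht), theta_subst hσ t,
    theta_applyWord _ id]
  rfl
end

section
/- Let A be the disjoint union of two copies of K_3 with an additional binary relation S, where S(a_i, b_j) holds iff i ≠ j, i.e., the structure A = ({1_0,2_0,3_0,1_1,2_1,3_1}; R, S) with R(a_i,b_j) ↔ (i = j ∧ a ≠ b) and S(a_i,b_j) ↔ i ≠ j. Then A is a core: every endomorphism of A is an automorphism. -/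
/-- R(a_i, b_j) holds iff i = j and a ≠ b: two disjoint copies of K₃. -/
def Rrel (x y : Fin 3 × Fin 2) : Prop := x.2 = y.2 ∧ x.1 ≠ y.1

/-- S(a_i, b_j) holds iff i ≠ j. -/
def Srel (x y : Fin 3 × Fin 2) : Prop := x.2 ≠ y.2

/-- The structure A = ({1₀,2₀,3₀,1₁,2₁,3₁}; R, S) is a core:
every endomorphism is an automorphism (equivalently, bijective). -/
theorem stmt_15 (h : Fin 3 × Fin 2 → Fin 3 × Fin 2)
    (hR : ∀ x y, Rrel x y → Rrel (h x) (h y))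
    (hS : ∀ x y, Srel x y → Srel (h x) (h y)) :
    Function.Bijective h := by
  have hinj : Function.Injective h := by
    intro x y hxy
    by_contra hne
    by_cases h2 : x.2 = y.2
    · have h1 : x.1 ≠ y.1 := by
        intro h1; exact hne (Prod.ext h1 h2)
      have := hR x y ⟨h2, h1⟩
      exact this.2 (congrArg Prod.fst hxy)
    · exact hS x y h2 (congrArg Prod.snd hxy)
  exact ⟨hinj, Finite.surjective_of_injective hinj⟩
end
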